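/- Coverage of the predictive interval in the exponential-exponential model: with T as above and the predictive density c(u;t) = tᵐu^{m-1}e^{-tu}/Γ(m) (Gamma(m, rate t) in u), fix a realized value u₀ > 0 and α ∈ (0,1). Define PI_α(t) = (u_L(t), u_U(t)) by Γ(m, t·u_L)/Γ(m) = 1-α/2 and Γ(m, t·u_U)/Γ(m) = α/2 (upper incomplete gamma). Then P(u₀ ∈ PI_α(T) | U = u₀) = 1 - α exactly, where T | U=u₀ ~ Gamma(m, rate u₀). -/
import Mathlib


open MeasureTheory Real Set

section Aux

variable (m : ℕ)

private noncomputable def fgam : ℝ → ℝ := fun s => s ^ (m - 1) * Real.exp (-s)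

private lemma fgam_integrableOn (hm : 1 ≤ m) {c : ℝ} (hc : 0 ≤ c) :
    IntegrableOn (fgam m) (Ioi c) := by
  have h0 : IntegrableOn (fun x : ℝ => Real.exp (-x) * x ^ ((m : ℝ) - 1)) (Ioi 0) :=
    Real.GammaIntegral_convergent (by exact_mod_cast Nat.pos_of_ne_zero (by omega))
  have h1 : IntegrableOn (fgam m) (Ioi 0) := by
    apply h0.congr_fun ?_ measurableSet_Ioi
    intro x hx
    have h2 : ((m : ℝ) - 1) = ((m - 1 : ℕ) : ℝ) := by
      rw [Nat.cast_sub hm]; norm_num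
    show Real.exp (-x) * x ^ ((m : ℝ) - 1) = fgam m x
    rw [h2, Real.rpow_natCast, fgam, mul_comm]
  exact h1.mono_set (Ioi_subset_Ioi hc)

/-- `Gup m x = ∫_{Ioi x} fgam m` (unnormalized upper incomplete gamma). -/
private noncomputable def Gup : ℝ → ℝ := fun x => ∫ s in Ioi x, fgam m s

private lemma Gup_split (hm : 1 ≤ m) {x y : ℝ} (hx : 0 ≤ x) (hxy : x ≤ y) :
    Gup m x = (∫ s in Ioc x y, fgam m s) + Gup m y := by
  rw [Gup, ← Set.Ioc_union_Ioi_eq_Ioi hxy,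
    setIntegral_union (Set.Ioc_disjoint_Ioi le_rfl) measurableSet_Ioi
      ((fgam_integrableOn m hm hx).mono_set Ioc_subset_Ioi_self)
      (fgam_integrableOn m hm (hx.trans hxy))]
  rfl

private lemma Gup_strictAnti (hm : 1 ≤ m) : StrictAntiOn (Gup m) (Ici (0 : ℝ)) := by
  intro x hx y hy hxy
  have hx0 : (0 : ℝ) ≤ x := hx
  have hsplit := Gup_split m hm hx0 hxy.le
  have hpos : 0 < ∫ s in Ioc x y, fgam m s := by
    rw [← intervalIntegral.integral_of_le hxy.le]
    apply intervalIntegral.intervalIntegral_pos_of_pos_on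
    · exact (intervalIntegrable_iff_integrableOn_Ioc_of_le hxy.le).mpr
        ((fgam_integrableOn m hm hx0).mono_set Ioc_subset_Ioi_self)
    · intro s hs
      have hs0 : 0 < s := lt_of_le_of_lt hx0 hs.1
      exact mul_pos (pow_pos hs0 _) (Real.exp_pos _)
    · exact hxy
  linarith

end Aux

/-- Exact conditional coverage of the predictive interval in the
exponential-exponential model.  Given a realized value `u₀ > 0` and
`α ∈ (0,1)`, suppose the interval endpoints `uL t < uU t` are defined for
every `t > 0` by `Γ(m, t·uL t)/Γ(m) = 1 - α/2` and `Γ(m, t·uU t)/Γ(m) = α/2`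
(upper incomplete gamma).  Since `T | U = u₀ ~ Gamma(shape m, rate u₀)` with
density `u₀^m t^(m-1) e^(-u₀ t)/Γ(m)`, the coverage probability
`P(u₀ ∈ PI_α(T) | U = u₀)` equals exactly `1 - α`. -/
theorem predictive_interval_exact_coverage (m : ℕ) (hm : 1 ≤ m)
    (u₀ : ℝ) (hu₀ : 0 < u₀) (α : ℝ) (hα : α ∈ Ioo (0 : ℝ) 1)
    (uL uU : ℝ → ℝ)
    (hL : ∀ t, 0 < t → 0 < uL t ∧
      (∫ s in Ioi (t * uL t), s ^ (m - 1) * Real.exp (-s)) / Real.Gamma m =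
        1 - α / 2)
    (hU : ∀ t, 0 < t → 0 < uU t ∧
      (∫ s in Ioi (t * uU t), s ^ (m - 1) * Real.exp (-s)) / Real.Gamma m =
        α / 2) :
    ∫ t in Ioi (0 : ℝ),
        Set.indicator {t : ℝ | uL t < u₀ ∧ u₀ < uU t}
          (fun t => u₀ ^ m * t ^ (m - 1) * Real.exp (-u₀ * t) / Real.Gamma m)
          t =
      1 - α := by
  obtain ⟨hα0, hα1⟩ := hα
  have hΓ : 0 < Real.Gamma m :=
    Real.Gamma_pos_of_pos (by exact_mod_cast Nat.pos_of_ne_zero (by omega))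
  set a := uL 1 with ha_def
  set b := uU 1 with hb_def
  have hL1 := hL 1 one_pos
  have hU1 := hU 1 one_pos
  have ha0 : 0 < a := hL1.1
  have hb0 : 0 < b := hU1.1
  have hGa : Gup m a = (1 - α / 2) * Real.Gamma m := by
    have h := (div_eq_iff hΓ.ne').mp (by simpa [one_mul] using hL1.2)
    simpa [Gup, fgam] using h
  have hGb : Gup m b = (α / 2) * Real.Gamma m := by
    have h := (div_eq_iff hΓ.ne').mp (by simpa [one_mul] using hU1.2)
    simpa [Gup, fgam] using h
  have hanti := Gup_strictAnti m hm
  have hab : a < b := by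
    rcases lt_trichotomy a b with h | h | h
    · exact h
    · rw [h, hGb] at hGa; nlinarith
    · have := hanti hb0.le ha0.le h
      rw [hGa, hGb] at this; nlinarith
  have hinj : ∀ x y : ℝ, 0 ≤ x → 0 ≤ y → Gup m x = Gup m y → x = y :=
    fun x y hx hy h => hanti.injOn hx hy h
  have hLa : ∀ t, 0 < t → t * uL t = a := by
    intro t ht
    obtain ⟨hpos, heq⟩ := hL t ht
    refine hinj _ _ (mul_pos ht hpos).le ha0.le ?_
    have h1 : Gup m (t * uL t) = (1 - α / 2) * Real.Gamma m := by
      have h := (div_eq_iff hΓ.ne').mp heq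
      simpa [Gup, fgam] using h
    rw [h1, hGa]
  have hUb : ∀ t, 0 < t → t * uU t = b := by
    intro t ht
    obtain ⟨hpos, heq⟩ := hU t ht
    refine hinj _ _ (mul_pos ht hpos).le hb0.le ?_
    have h1 : Gup m (t * uU t) = (α / 2) * Real.Gamma m := by
      have h := (div_eq_iff hΓ.ne').mp heq
      simpa [Gup, fgam] using h
    rw [h1, hGb]
  set c := a / u₀ with hc_def
  set d := b / u₀ with hd_def
  have hc0 : 0 < c := div_pos ha0 hu₀
  have hcd : c < d := by rw [hc_def, hd_def]; gcongr
  set g : ℝ → ℝ :=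
    fun t => u₀ ^ m * t ^ (m - 1) * Real.exp (-u₀ * t) / Real.Gamma m with hg_def
  -- rewrite the indicator on `Ioi 0`
  have hEq : EqOn (Set.indicator {t : ℝ | uL t < u₀ ∧ u₀ < uU t} g)
      (Set.indicator (Ioo c d) g) (Ioi (0 : ℝ)) := by
    intro t ht
    have ht0 : 0 < t := ht
    have hiff : (uL t < u₀ ∧ u₀ < uU t) ↔ t ∈ Ioo c d := by
      have h1 := hLa t ht0
      have h2 := hUb t ht0
      constructor
      · rintro ⟨p, q⟩
        constructor
        · rw [hc_def, div_lt_iff₀ hu₀]; nlinarith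
        · rw [hd_def, lt_div_iff₀ hu₀]; nlinarith
      · rintro ⟨p, q⟩
        rw [hc_def, div_lt_iff₀ hu₀] at p
        rw [hd_def, lt_div_iff₀ hu₀] at q
        constructor <;> nlinarith
    simp only [Set.indicator_apply, Set.mem_setOf_eq]
    rw [if_congr hiff rfl rfl]
  have hIoo : Ioo c d ⊆ Ioi (0 : ℝ) := fun x hx => lt_trans hc0 hx.1
  rw [setIntegral_congr_fun measurableSet_Ioi hEq,
    setIntegral_indicator measurableSet_Ioo,
    Set.inter_eq_right.mpr hIoo,
    ← integral_Ioc_eq_integral_Ioo, ← intervalIntegral.integral_of_le hcd.le]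
  -- pointwise form of the density
  have hg : ∀ t : ℝ, g t = (u₀ / Real.Gamma m) * fgam m (u₀ * t) := by
    intro t
    have hpow : u₀ ^ m = u₀ ^ (m - 1) * u₀ := by
      rw [← pow_succ]; congr 1; omega
    rw [hg_def, fgam]
    simp only [neg_mul, hpow, mul_pow]
    ring
  calc ∫ t in c..d, g t
      = ∫ t in c..d, (u₀ / Real.Gamma m) * fgam m (u₀ * t) := by
        simp only [hg]
    _ = (u₀ / Real.Gamma m) * ∫ t in c..d, fgam m (u₀ * t) := by
        rw [intervalIntegral.integral_const_mul]
    _ = (u₀ / Real.Gamma m) * (u₀⁻¹ * ∫ s in u₀ * c..u₀ * d, fgam m s) := by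
        rw [intervalIntegral.integral_comp_mul_left (fgam m) hu₀.ne']
        simp [smul_eq_mul]
    _ = (u₀ / Real.Gamma m) * (u₀⁻¹ * ∫ s in a..b, fgam m s) := by
        rw [hc_def, hd_def, mul_div_cancel₀ _ hu₀.ne', mul_div_cancel₀ _ hu₀.ne']
    _ = 1 - α := by
        have hsub : ∫ s in a..b, fgam m s = (1 - α) * Real.Gamma m := by
          rw [intervalIntegral.integral_of_le hab.le]
          have := Gup_split m hm ha0.le hab.le
          rw [hGa, hGb] at this
          linarith
        rw [hsub]
        field_simp
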